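/- Conversely, any T-tiling of an h × 1 rectangle (for the reachability construction) yields a directed path from s to t in G: if τ : {1,…,h} → T is a T-tiling, then t is reachable from s in G. -/
import Mathlib


structure Tile (C : Type) where
  left : C
  up : C
  right : C
  down : C
deriving DecidableEq

/-- A `T`-tiling of the `H × W` rectangle: all tiles are from `T`, the borders are
white on all four sides, and adjacent tiles match horizontally and vertically. -/
def IsTiling {C : Type} (white : C) (T : Finset (Tile C)) (H W : ℕ)
    (τ : Fin H → Fin W → Tile C) : Prop :=
  (∀ i j, τ i j ∈ T) ∧
  (∀ i j, j.val = 0 → (τ i j).left = white) ∧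
  (∀ i j, j.val = W - 1 → (τ i j).right = white) ∧
  (∀ i j, i.val = 0 → (τ i j).up = white) ∧
  (∀ i j, i.val = H - 1 → (τ i j).down = white) ∧
  (∀ (i : Fin H) (j : Fin W) (h : j.val + 1 < W),
      (τ i j).right = (τ i ⟨j.val + 1, h⟩).left) ∧
  (∀ (i : Fin H) (j : Fin W) (h : i.val + 1 < H),
      (τ i j).down = (τ ⟨i.val + 1, h⟩ j).up)

/-- A `T`-tiling of the `h × 1` rectangle (a single column): left/right colors of all
tiles are white, top of the first and bottom of the last tile are white, and
consecutive tiles match vertically. -/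
def IsColTiling {C : Type} (white : C) (T : Finset (Tile C)) (h : ℕ)
    (τ : Fin h → Tile C) : Prop :=
  (∀ i, τ i ∈ T) ∧
  (∀ i : Fin h, i.val = 0 → (τ i).up = white) ∧
  (∀ i : Fin h, i.val = h - 1 → (τ i).down = white) ∧
  (∀ i, (τ i).left = white) ∧
  (∀ i, (τ i).right = white) ∧
  (∀ (i : Fin h) (hlt : i.val + 1 < h), (τ i).down = (τ ⟨i.val + 1, hlt⟩).up)

/-- A deterministic set of tile types: there is a partition of the colors
`C = Col ⊔ Colᶜ` with `white ∈ Col` such that tops and bottoms of tiles lie on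
opposite sides, and a tile is determined by its (left,up) colors when its left
color is in `Col`, and by its (right,up) colors when its right color is in `Colᶜ`. -/
def Deterministic {C : Type} (white : C) (T : Finset (Tile C)) : Prop :=
  ∃ Col : Set C, white ∈ Col ∧
    (∀ t ∈ T, (t.up ∈ Col ↔ t.down ∉ Col)) ∧
    (∀ c ∈ Col, ∀ c' : C, ∀ t ∈ T, ∀ t' ∈ T,
       t.left = c → t.up = c' → t'.left = c → t'.up = c' → t = t') ∧
    (∀ c ∉ Col, ∀ c' : C, ∀ t ∈ T, ∀ t' ∈ T,
       t.right = c → t.up = c' → t'.right = c → t'.up = c' → t = t')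

/-- Tile types for the reduction from s-t reachability: colors are `Option V`
with `none` playing the role of white. -/
def reachTiles {V : Type} [Fintype V] [DecidableEq V]
    (E : V → V → Prop) [DecidableRel E] (s t : V) : Finset (Tile (Option V)) :=
  ({⟨none, none, none, some s⟩, ⟨none, some s, none, some s⟩,
    ⟨none, some t, none, none⟩} : Finset (Tile (Option V))) ∪
  Finset.image (fun p : V × V => ⟨none, some p.1, none, some p.2⟩)
    (Finset.univ.filter fun p : V × V => E p.1 p.2)

/-- Any tiling of an h × 1 rectangle with the reachability tile set yields a
directed path from s to t. -/
theorem colTiling_to_reach {V : Type} [Fintype V] [DecidableEq V]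
    (E : V → V → Prop) [DecidableRel E] (s t : V) (hst : s ≠ t)
    (h : ℕ) (hh : 0 < h) (τ : Fin h → Tile (Option V))
    (ht : IsColTiling none (reachTiles E s t) h τ) :
    Relation.ReflTransGen E s t := by
  obtain ⟨hmem, htop, hbot, -, -, hmatch⟩ := ht
  -- characterize tiles
  have hchar : ∀ i : Fin h, (τ i = ⟨none, none, none, some s⟩) ∨
      (τ i = ⟨none, some s, none, some s⟩) ∨
      (τ i = ⟨none, some t, none, none⟩) ∨
      (∃ u w, E u w ∧ τ i = ⟨none, some u, none, some w⟩) := by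
    intro i
    have := hmem i
    simp only [reachTiles, Finset.mem_union, Finset.mem_insert, Finset.mem_singleton,
      Finset.mem_image, Finset.mem_filter, Finset.mem_univ, true_and] at this
    rcases this with (h1 | h2 | h3) | ⟨⟨u, w⟩, he, heq⟩
    · exact Or.inl h1
    · exact Or.inr (Or.inl h2)
    · exact Or.inr (Or.inr (Or.inl h3))
    · exact Or.inr (Or.inr (Or.inr ⟨u, w, he, heq.symm⟩))
  have key : ∀ n (hn : n < h), Relation.ReflTransGen E s t ∨
      ∃ v, (τ ⟨n, hn⟩).down = some v ∧ Relation.ReflTransGen E s v := by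
    intro n
    induction n with
    | zero =>
      intro hn
      have h0 : (τ ⟨0, hn⟩).up = none := htop ⟨0, hn⟩ rfl
      rcases hchar ⟨0, hn⟩ with h1 | h2 | h3 | ⟨u, w, he, heq⟩
      · exact Or.inr ⟨s, by rw [h1], Relation.ReflTransGen.refl⟩
      · rw [h2] at h0; simp at h0
      · rw [h3] at h0; simp at h0
      · rw [heq] at h0; simp at h0
    | succ n ih =>
      intro hn
      have hn' : n < h := Nat.lt_of_succ_lt hn
      rcases ih hn' with hl | ⟨v, hd, hr⟩
      · exact Or.inl hl
      have hup : (τ ⟨n + 1, hn⟩).up = some v := by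
        rw [← hmatch ⟨n, hn'⟩ hn, hd]
      rcases hchar ⟨n + 1, hn⟩ with h1 | h2 | h3 | ⟨u, w, he, heq⟩
      · rw [h1] at hup; simp at hup
      · rw [h2] at hup
        have hvs : v = s := (Option.some_injective _ hup.symm)
        exact Or.inr ⟨s, by rw [h2], hvs ▸ hr⟩
      · have : v = t := by rw [h3] at hup; exact (Option.some_injective _ hup.symm)
        exact Or.inl (this ▸ hr)
      · have : v = u := by rw [heq] at hup; exact (Option.some_injective _ hup.symm)
        exact Or.inr ⟨w, by rw [heq], hr.tail (this ▸ he)⟩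
  have hlast : h - 1 < h := Nat.sub_lt hh Nat.one_pos
  rcases key (h - 1) hlast with hl | ⟨v, hd, -⟩
  · exact hl
  · rw [hbot ⟨h - 1, hlast⟩ rfl] at hd; simp at hd
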